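/- Let n ≥ 1, let h_1 > h_2 > ... > h_{2n} be integers, and let v_1 ≥ v_2 ≥ ... ≥ v_{2n} be real numbers satisfying the pairing condition and the Newton-above-Hodge condition. Assume in addition the Pollack condition v_n = v_{n+1}. Then r := Σ_{i=n+1}^{2n} v_i − Σ_{i=n+1}^{2n} h_i ≥ (h_n − h_{n+1})/2. -/

import Mathlib

open Finset

/-
The Pollack condition together with the pairing at `i = n` pins down the middle valuation:
`v (n+1) = (h n + h (n+1)) / 2`, so the first term of `r` is exactly `(h n - h (n+1)) / 2`.
The remaining terms `∑_{i=n+2}^{2n} (v i - h i)` form a Newton-above-Hodge partial sum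
(of length `n - 1`, read from the bottom), hence are nonnegative.
-/

theorem Finset.sum_Icc_one_reflect {M : Type*} [AddCommMonoid M] (f : ℕ → M) {j m : ℕ}
    (hj : j ≤ m) : ∑ i ∈ Icc 1 j, f (m + 1 - i) = ∑ i ∈ Icc (m + 1 - j) m, f i := by
  apply sum_nbij' (fun i => m + 1 - i) (fun i => m + 1 - i) <;>
    intro i hi <;> simp only [mem_Icc] at * <;> omega

theorem Finset.sum_Icc_le_sum_Icc_of_reflected_partial_sums {M : Type*} [AddCommMonoid M]
    [Preorder M] {m : ℕ} {a b : ℕ → M}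
    (hpartial : ∀ j, 1 ≤ j → j ≤ m →
      ∑ i ∈ Icc 1 j, a (m + 1 - i) ≤ ∑ i ∈ Icc 1 j, b (m + 1 - i))
    {k : ℕ} (hk : 1 ≤ k) : ∑ i ∈ Icc k m, a i ≤ ∑ i ∈ Icc k m, b i := by
  by_cases hkm : k ≤ m
  · have hsum := hpartial (m + 1 - k) (by omega) (by omega)
    rwa [sum_Icc_one_reflect a (by omega), sum_Icc_one_reflect b (by omega),
      show m + 1 - (m + 1 - k) = k by omega] at hsum
  · simp [Icc_eq_empty_of_lt (not_le.mp hkm)]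

theorem pollack_condition_slope_lower_bound_general
    (n : ℕ) (hn : 1 ≤ n) (h : ℕ → ℤ) (v : ℕ → ℝ)
    (pairing : ∀ i, 1 ≤ i → i ≤ n →
      v i + v (2 * n + 1 - i) = (h i : ℝ) + (h (2 * n + 1 - i) : ℝ))
    (newton_above_hodge : ∀ j, 1 ≤ j → j ≤ 2 * n →
      ∑ i ∈ Icc 1 j, (h (2 * n + 1 - i) : ℝ) ≤ ∑ i ∈ Icc 1 j, v (2 * n + 1 - i))
    (pollack : v n = v (n + 1)) :
    ((h n : ℝ) - (h (n + 1) : ℝ)) / 2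
      ≤ ∑ i ∈ Icc (n + 1) (2 * n), v i - ∑ i ∈ Icc (n + 1) (2 * n), (h i : ℝ) := by
  have hmiddle : v (n + 1) - h (n + 1) = ((h n : ℝ) - h (n + 1)) / 2 := by
    have hpair := pairing n hn le_rfl
    rw [show 2 * n + 1 - n = n + 1 by omega] at hpair
    linarith
  have htail : ∑ i ∈ Icc (n + 1 + 1) (2 * n), (h i : ℝ) ≤ ∑ i ∈ Icc (n + 1 + 1) (2 * n), v i :=
    sum_Icc_le_sum_Icc_of_reflected_partial_sums (a := fun i => (h i : ℝ)) newton_above_hodge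
      (by omega)
  rw [Icc_add_one_left_eq_Ioc] at htail
  rw [← Ioc_insert_left (by omega : n + 1 ≤ 2 * n), sum_insert left_notMem_Ioc,
    sum_insert left_notMem_Ioc]
  linarith

/-- Let `n ≥ 1`, let `h 1 > h 2 > ... > h (2n)` be integers and
`v 1 ≥ v 2 ≥ ... ≥ v (2n)` real numbers satisfying the pairing condition and the
Newton-above-Hodge condition.  Assume in addition the Pollack condition `v n = v (n+1)`.
Then `r := ∑_{i = n+1}^{2n} v i − ∑_{i = n+1}^{2n} h i ≥ (h n − h (n+1)) / 2`. -/
theorem pollack_condition_slope_lower_bound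
    (n : ℕ) (hn : 1 ≤ n) (h : ℕ → ℤ) (v : ℕ → ℝ)
    (hdec : ∀ i, 1 ≤ i → i < 2 * n → h (i + 1) < h i)
    (vdec : ∀ i, 1 ≤ i → i < 2 * n → v (i + 1) ≤ v i)
    (pairing : ∀ i, 1 ≤ i → i ≤ n →
      v i + v (2 * n + 1 - i) = (h i : ℝ) + (h (2 * n + 1 - i) : ℝ))
    (newton_above_hodge : ∀ j, 1 ≤ j → j ≤ 2 * n →
      ∑ i ∈ Icc 1 j, (h (2 * n + 1 - i) : ℝ) ≤ ∑ i ∈ Icc 1 j, v (2 * n + 1 - i))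
    (endpoints : ∑ i ∈ Icc 1 (2 * n), v (2 * n + 1 - i)
      = ∑ i ∈ Icc 1 (2 * n), (h (2 * n + 1 - i) : ℝ))
    (pollack : v n = v (n + 1)) :
    ((h n : ℝ) - (h (n + 1) : ℝ)) / 2
      ≤ ∑ i ∈ Icc (n + 1) (2 * n), v i - ∑ i ∈ Icc (n + 1) (2 * n), (h i : ℝ) :=
  pollack_condition_slope_lower_bound_general n hn h v pairing newton_above_hodge pollack
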